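/- arXiv:1403.5789 — 5 statements merged into one kernel-verified Lean document; each statement's English description precedes it below -/
import Mathlib

section
/- For a positive integer m, a nonnegative integer n and a finite multiset M of positive integers, define F(m, n, M) := Σ_{k∈ℤ, |k|<m} (−1 + n·(m−|k|)/m + Σ_{μ∈M} {−|k|·μ/m}) · t^{k/m}, a finitely supported function ℚ → ℚ. Then for every positive integer m, nonnegative integers n₁, n₂, every integer d with 0 ≤ d ≤ m, and finite multisets M₁, M₂ of positive integers, one has F(m, n₁+n₂, M₁⊎M₂) − F(m, n₂+d, M₂) = F(m, n₁+(m−d), M₁) − F(m, m, ∅). (Moreover F(m, m, ∅) = Σ_{|k|<m}(m−|k|−1)t^{k/m}, the spectrum of the ordinary m-fold point.) -/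
/-- The contribution `F(m, n, M)` of a single exceptional divisor of multiplicity `m`,
meeting `n` branches of the strict transform transversally and neighbouring exceptional
divisors of multiplicities listed in the multiset `M` (Lemma 3.1):
`F(m, n, M) = Σ_{|k|<m} (−1 + n(m−|k|)/m + Σ_{μ∈M} {−|k|μ/m}) t^{k/m}`,
a finitely supported function `ℚ → ℚ`, with `t^ξ` the indicator of `ξ` and `{x}` the
fractional part. -/
noncomputable def F (m n : ℕ) (M : Multiset ℕ) : ℚ →₀ ℚ :=
  ∑ k ∈ Finset.Ioo (-(m : ℤ)) (m : ℤ),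
    Finsupp.single ((k : ℚ) / (m : ℚ))
      (-1 + (n : ℚ) * ((m : ℚ) - (k.natAbs : ℚ)) / (m : ℚ)
        + (M.map fun μ => Int.fract (-((k.natAbs : ℚ) * (μ : ℚ)) / (m : ℚ))).sum)

/-- Each coefficient of `F m n M` is affine in `n` and additive in `M`, with constant term `-1`,
which `F m 0 0` absorbs. -/
theorem F_add_F (m n n' : ℕ) (M M' : Multiset ℕ) :
    F m n M + F m n' M' = F m (n + n') (M + M') + F m 0 0 := by
  simp only [F, ← Finset.sum_add_distrib, ← Finsupp.single_add]
  refine Finset.sum_congr rfl fun k _ => congrArg _ ?_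
  simp only [bind_pure_comp, Multiset.fmap_def, Multiset.map_add, Multiset.sum_add,
    Multiset.map_zero, Multiset.sum_zero, Nat.cast_add, Nat.cast_zero]
  ring

theorem F_self_zero (m : ℕ) :
    F m m 0 = ∑ k ∈ Finset.Ioo (-(m : ℤ)) (m : ℤ),
      Finsupp.single ((k : ℚ) / (m : ℚ)) ((m : ℚ) - (k.natAbs : ℚ) - 1) := by
  refine Finset.sum_congr rfl fun k hk => congrArg _ ?_
  have hm : (m : ℚ) ≠ 0 := by
    have := Finset.mem_Ioo.mp hk
    exact_mod_cast (show (m : ℤ) ≠ 0 by omega)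
  simp only [bind_pure_comp, Multiset.fmap_def, Multiset.map_zero, Multiset.sum_zero, add_zero]
  field_simp
  ring

theorem stmt_1_general (m : ℕ) (n₁ n₂ : ℕ) (d : ℕ) (hd : d ≤ m)
    (M₁ M₂ : Multiset ℕ) :
    F m (n₁ + n₂) (M₁ + M₂) - F m (n₂ + d) M₂ = F m (n₁ + (m - d)) M₁ - F m m 0 ∧
    F m m 0 = ∑ k ∈ Finset.Ioo (-(m : ℤ)) (m : ℤ),
      Finsupp.single ((k : ℚ) / (m : ℚ)) ((m : ℚ) - (k.natAbs : ℚ) - 1) := by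
  refine ⟨?_, F_self_zero m⟩
  rw [sub_eq_sub_iff_add_eq_add, F_add_F m (n₁ + n₂), F_add_F m (n₁ + (m - d)), add_zero,
    show n₁ + (m - d) + (n₂ + d) = n₁ + n₂ + m by omega]

/-- the combinatorial core of part 1 of Theorem 4.1, the cut-and-paste
formula: for `m > 0`, `n₁, n₂ ≥ 0`, `0 ≤ d ≤ m` and finite multisets `M₁, M₂` of positive
integers, `F(m, n₁+n₂, M₁⊎M₂) − F(m, n₂+d, M₂) = F(m, n₁+(m−d), M₁) − F(m, m, ∅)`;
moreover `F(m, m, ∅) = Σ_{|k|<m} (m−|k|−1) t^{k/m}`, the spectrum of the ordinary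
`m`-fold point. -/
theorem stmt_1 (m : ℕ) (hm : 0 < m) (n₁ n₂ : ℕ) (d : ℕ) (hd : d ≤ m)
    (M₁ M₂ : Multiset ℕ) (hM₁ : ∀ μ ∈ M₁, 0 < μ) (hM₂ : ∀ μ ∈ M₂, 0 < μ) :
    F m (n₁ + n₂) (M₁ + M₂) - F m (n₂ + d) M₂ = F m (n₁ + (m - d)) M₁ - F m m 0 ∧
    F m m 0 = ∑ k ∈ Finset.Ioo (-(m : ℤ)) (m : ℤ),
      Finsupp.single ((k : ℚ) / (m : ℚ)) ((m : ℚ) - (k.natAbs : ℚ) - 1) :=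
  stmt_1_general m n₁ n₂ d hd M₁ M₂
end

section
/- Let m < M be positive integers. In the group of finitely supported functions ℚ → ℚ, the following identity holds: Σ_{|s|<M} {−s·m/M}·t^{s/M} − Σ_{|s|<m} {s·M/m}·t^{s/m} = Σ_{|s|<M−m} {−s·m/(M−m)}·t^{s/(M−m)} − Σ_{|s|<m} {s·(M−m)/m}·t^{s/m} − Σ_{|s|<M−m} t^{s/(M−m)} + Σ_{|s|<M} {s·(M−m)/M}·t^{s/M} + Σ_{|s|<M−m} (1 − {−s·M/(M−m)})·t^{s/(M−m)}. -/
/-!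
Every term on the right-hand side is rewritten by shifting the argument of a fractional part by
an integer (`s(M - m)/m = sM/m - s`, `s(M - m)/M = -sm/M + s`, `-sM/(M - m) = -sm/(M - m) - s`),
after which the two sums over `|s| < M - m` with coefficients `{x}` and `1 - {x}` combine into
`Σ t^{s/(M-m)}` and everything cancels.
-/

open Finset

namespace Int

variable {k : Type*} [Field k] [LinearOrder k] [IsStrictOrderedRing k] [FloorRing k]

theorem fract_intCast_mul_sub_self_div (s : ℤ) (a b : k) :
    fract (s * (a - b) / b) = fract (s * a / b) := by
  rcases eq_or_ne b 0 with rfl | hb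
  · simp
  rw [mul_sub, sub_div, mul_div_cancel_right₀ _ hb, fract_sub_intCast]

theorem fract_intCast_mul_self_sub_div (s : ℤ) (a b : k) :
    fract (s * (b - a) / b) = fract (-(s * a) / b) := by
  rcases eq_or_ne b 0 with rfl | hb
  · simp
  exact fract_eq_fract.2 ⟨s, by field_simp; ring⟩

theorem fract_neg_intCast_mul_div_sub (s : ℤ) (a b : k) :
    fract (-(s * a) / (a - b)) = fract (-(s * b) / (a - b)) := by
  rcases eq_or_ne (a - b) 0 with hab | hab
  · simp [hab]
  exact fract_eq_fract.2 ⟨-s, by field_simp; push_cast; ring⟩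

end Int

theorem Finset.sum_single_add_sum_single_one_sub {ι α k : Type*} [Ring k] (S : Finset ι)
    (g : ι → α) (f : ι → k) :
    ∑ i ∈ S, Finsupp.single (g i) (f i) + ∑ i ∈ S, Finsupp.single (g i) (1 - f i)
      = ∑ i ∈ S, Finsupp.single (g i) 1 := by
  rw [← sum_add_distrib]
  exact sum_congr rfl fun i _ => by rw [← Finsupp.single_add, add_sub_cancel]

theorem stmt_2_general (m M : ℕ) (hmM : m < M) :
    (∑ s ∈ Finset.Ioo (-(M : ℤ)) (M : ℤ),
        Finsupp.single ((s : ℚ) / (M : ℚ)) (Int.fract (-((s : ℚ) * (m : ℚ)) / (M : ℚ))))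
      - ∑ s ∈ Finset.Ioo (-(m : ℤ)) (m : ℤ),
          Finsupp.single ((s : ℚ) / (m : ℚ)) (Int.fract ((s : ℚ) * (M : ℚ) / (m : ℚ)))
    =
    (∑ s ∈ Finset.Ioo (-((M - m : ℕ) : ℤ)) ((M - m : ℕ) : ℤ),
        Finsupp.single ((s : ℚ) / ((M - m : ℕ) : ℚ))
          (Int.fract (-((s : ℚ) * (m : ℚ)) / ((M - m : ℕ) : ℚ))))
      - (∑ s ∈ Finset.Ioo (-(m : ℤ)) (m : ℤ),
          Finsupp.single ((s : ℚ) / (m : ℚ))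
            (Int.fract ((s : ℚ) * ((M - m : ℕ) : ℚ) / (m : ℚ))))
      - (∑ s ∈ Finset.Ioo (-((M - m : ℕ) : ℤ)) ((M - m : ℕ) : ℤ),
          Finsupp.single ((s : ℚ) / ((M - m : ℕ) : ℚ)) (1 : ℚ))
      + (∑ s ∈ Finset.Ioo (-(M : ℤ)) (M : ℤ),
          Finsupp.single ((s : ℚ) / (M : ℚ))
            (Int.fract ((s : ℚ) * ((M - m : ℕ) : ℚ) / (M : ℚ))))
      + (∑ s ∈ Finset.Ioo (-((M - m : ℕ) : ℤ)) ((M - m : ℕ) : ℤ),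
          Finsupp.single ((s : ℚ) / ((M - m : ℕ) : ℚ))
            (1 - Int.fract (-((s : ℚ) * (M : ℚ)) / ((M - m : ℕ) : ℚ)))) := by
  have hK : ((M - m : ℕ) : ℚ) = M - m := Nat.cast_sub hmM.le
  simp only [hK, Int.fract_intCast_mul_sub_self_div, Int.fract_intCast_mul_self_sub_div,
    Int.fract_neg_intCast_mul_div_sub]
  rw [← sum_single_add_sum_single_one_sub]
  abel

/-- the cancellation identity, equation (19) of the paper: for positive
integers `m < M`, in the group of finitely supported functions `ℚ → ℚ` (with `t^ξ` the
indicator of `ξ` and `{x} = Int.fract x` the fractional part),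
`Σ_{|s|<M} {−sm/M} t^{s/M} − Σ_{|s|<m} {sM/m} t^{s/m}
  = Σ_{|s|<M−m} {−sm/(M−m)} t^{s/(M−m)} − Σ_{|s|<m} {s(M−m)/m} t^{s/m}
    − Σ_{|s|<M−m} t^{s/(M−m)} + Σ_{|s|<M} {s(M−m)/M} t^{s/M}
    + Σ_{|s|<M−m} (1 − {−sM/(M−m)}) t^{s/(M−m)}`. -/
theorem stmt_2 (m M : ℕ) (hm : 0 < m) (hmM : m < M) :
    (∑ s ∈ Finset.Ioo (-(M : ℤ)) (M : ℤ),
        Finsupp.single ((s : ℚ) / (M : ℚ)) (Int.fract (-((s : ℚ) * (m : ℚ)) / (M : ℚ))))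
      - ∑ s ∈ Finset.Ioo (-(m : ℤ)) (m : ℤ),
          Finsupp.single ((s : ℚ) / (m : ℚ)) (Int.fract ((s : ℚ) * (M : ℚ) / (m : ℚ)))
    =
    (∑ s ∈ Finset.Ioo (-((M - m : ℕ) : ℤ)) ((M - m : ℕ) : ℤ),
        Finsupp.single ((s : ℚ) / ((M - m : ℕ) : ℚ))
          (Int.fract (-((s : ℚ) * (m : ℚ)) / ((M - m : ℕ) : ℚ))))
      - (∑ s ∈ Finset.Ioo (-(m : ℤ)) (m : ℤ),
          Finsupp.single ((s : ℚ) / (m : ℚ))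
            (Int.fract ((s : ℚ) * ((M - m : ℕ) : ℚ) / (m : ℚ))))
      - (∑ s ∈ Finset.Ioo (-((M - m : ℕ) : ℤ)) ((M - m : ℕ) : ℤ),
          Finsupp.single ((s : ℚ) / ((M - m : ℕ) : ℚ)) (1 : ℚ))
      + (∑ s ∈ Finset.Ioo (-(M : ℤ)) (M : ℤ),
          Finsupp.single ((s : ℚ) / (M : ℚ))
            (Int.fract ((s : ℚ) * ((M - m : ℕ) : ℚ) / (M : ℚ))))
      + (∑ s ∈ Finset.Ioo (-((M - m : ℕ) : ℤ)) ((M - m : ℕ) : ℤ),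
          Finsupp.single ((s : ℚ) / ((M - m : ℕ) : ℚ))
            (1 - Int.fract (-((s : ℚ) * (M : ℚ)) / ((M - m : ℕ) : ℚ)))) :=
  stmt_2_general m M hmM
end

section
/- For integers p, q ≥ 0 with q ≠ 1 and p + q ≥ 2, let S_{p,q} := Σ_{|k|<p+2q} (q − ⌈q·|k|/(p+2q)⌉)·t^{k/(p+2q)} + Σ_{|k|<p+q} (p − 1 − ⌊p·|k|/(p+q)⌋)·t^{k/(p+q)}, a finitely supported function ℚ → ℤ. Then the maximal element of the support of S_{p,q} equals 1 − 2/(p+q) if p > q, and equals 1 − 3/(p+2q) if p ≤ q. -/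
/-- The spectrum of the basic-type plane curve singularity
`C_{p,q} = {(x^p+y^p)(y^q−x^{2q})=0}` (formula (13) of the paper), as a finitely supported
function `ℚ → ℤ`; `t^ξ` is the indicator function `Finsupp.single ξ 1`. -/
noncomputable def S (p q : ℕ) : ℚ →₀ ℤ :=
  (∑ k ∈ Finset.Ioo (-(p + 2 * q : ℤ)) (p + 2 * q : ℤ),
      Finsupp.single ((k : ℚ) / (p + 2 * q : ℚ))
        ((q : ℤ) - ⌈((q * k.natAbs : ℕ) : ℚ) / (p + 2 * q : ℚ)⌉))
  + ∑ k ∈ Finset.Ioo (-(p + q : ℤ)) (p + q : ℤ),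
      Finsupp.single ((k : ℚ) / (p + q : ℚ))
        ((p : ℤ) - 1 - ⌊((p * k.natAbs : ℕ) : ℚ) / (p + q : ℚ)⌋)


/-! With `N = p + 2q` and `M = p + q`, the coefficient of `t^{k/N}` is `⌊q (1 - |k/N|)⌋` and that
of `t^{k/M}` is `⌈p (1 - |k/M|)⌉ - 1`, so near the top of the spectrum the grid points `1 - j/N`
and `1 - j/M` carry `⌊qj/N⌋` and `⌈pj/M⌉ - 1`. For `p > q` the first sum vanishes above
`1 - 2/M` and the second has coefficient `1` at `j = 2`; for `p ≤ q` the first sum has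
coefficient `1` at `j = 3` and nothing survives above it. When `p = 0` the second sum is
`-∑_{|k|<q} t^{k/q}`, and its `-1` cancels the coefficient `1` of the first sum at
`1 - 1/q = 1 - 2/N`. -/
open Finset

theorem Int.floor_natCast_sub {R : Type*} [Ring R] [LinearOrder R] [FloorRing R] [IsOrderedRing R]
    (n : ℕ) (a : R) : ⌊(n : R) - a⌋ = n - ⌈a⌉ := by
  rw [sub_eq_add_neg, Int.floor_natCast_add, Int.floor_neg, sub_eq_add_neg]

theorem Int.ceil_natCast_sub {R : Type*} [Ring R] [LinearOrder R] [FloorRing R] [IsOrderedRing R]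
    (n : ℕ) (a : R) : ⌈(n : R) - a⌉ = n - ⌊a⌋ := by
  rw [sub_eq_add_neg, Int.ceil_natCast_add, Int.ceil_neg, sub_eq_add_neg]

theorem floor_natCast_mul_div_eq {c j n v : ℕ} (h₁ : v * n ≤ c * j) (h₂ : c * j < (v + 1) * n) :
    ⌊(c : ℚ) * (j / n)⌋ = v := by
  rw [mul_div_assoc', ← Nat.cast_mul, Rat.floor_natCast_div_natCast]
  exact_mod_cast Nat.div_eq_of_lt_le h₁ h₂

theorem ceil_natCast_mul_div_eq {c j n v : ℕ} (h₁ : c * j ≤ v * n) (h₂ : v * n < c * j + n) :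
    ⌈(c : ℚ) * (j / n)⌉ = v := by
  have hn : (0 : ℚ) < n := by exact_mod_cast (by omega : 0 < n)
  rw [Int.ceil_eq_iff, mul_div_assoc', lt_div_iff₀ hn, div_le_iff₀ hn]
  have h₂' : ((v * n : ℕ) : ℚ) < (c * j + n : ℕ) := by exact_mod_cast h₂
  push_cast at h₂' ⊢
  exact ⟨by linarith, by exact_mod_cast h₁⟩

theorem one_sub_div_nonneg {a n : ℕ} (h : a ≤ n) : 0 ≤ 1 - (a : ℚ) / n :=
  sub_nonneg.2 (div_le_one_of_le₀ (by exact_mod_cast h) n.cast_nonneg)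

theorem one_sub_div_lt_one_sub_div_iff {a m j n : ℕ} (hm : 0 < m) (hn : 0 < n) :
    1 - (a : ℚ) / m < 1 - (j : ℚ) / n ↔ j * m < a * n := by
  rw [sub_lt_sub_iff_left, div_lt_div_iff₀ (by exact_mod_cast hn) (by exact_mod_cast hm)]
  norm_cast

theorem one_sub_div_eq_one_sub_div_iff {a m j n : ℕ} (hm : 0 < m) (hn : 0 < n) :
    1 - (a : ℚ) / m = 1 - (j : ℚ) / n ↔ j * m = a * n := by
  rw [sub_right_inj, div_eq_div_iff (by positivity) (by positivity), eq_comm]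
  norm_cast

theorem Finsupp.isGreatest_support_iff {α M : Type*} [LinearOrder α] [Zero M] (f : α →₀ M)
    (x : α) : IsGreatest (f.support : Set α) x ↔ f x ≠ 0 ∧ ∀ ξ, x < ξ → f ξ = 0 := by
  simp only [IsGreatest, upperBounds, Finset.mem_coe, Finsupp.mem_support_iff, Set.mem_ofPred_eq]
  refine and_congr_right fun _ => ⟨fun h ξ hξ => ?_, fun h ξ hξ => ?_⟩
  · by_contra hne
    exact (h hne).not_gt hξ
  · by_contra hlt
    exact hξ (h ξ (not_le.1 hlt))

def grid (n : ℕ) : Set ℚ := {ξ | ∃ k ∈ Ioo (-(n : ℤ)) n, (k : ℚ) / n = ξ}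

noncomputable def spectralSum (n : ℕ) (f : ℚ → ℤ) : ℚ →₀ ℤ :=
  ∑ k ∈ Ioo (-(n : ℤ)) n, Finsupp.single ((k : ℚ) / n) (f (k / n))

theorem spectralSum_apply (n : ℕ) (f : ℚ → ℤ) (ξ : ℚ) :
    spectralSum n f ξ = (grid n).indicator f ξ := by
  simp only [spectralSum, Finsupp.finsetSum_apply, Finsupp.single_apply]
  by_cases hξ : ξ ∈ grid n
  · obtain ⟨k, hk, rfl⟩ := hξ
    have hn : (n : ℚ) ≠ 0 := by
      have := mem_Ioo.1 hk
      exact_mod_cast (by omega : n ≠ 0)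
    rw [Set.indicator_of_mem (show (k : ℚ) / n ∈ grid n from ⟨k, hk, rfl⟩),
      sum_eq_single_of_mem k hk, if_pos rfl]
    intro l _ hlk
    rw [if_neg]
    rwa [div_left_inj' hn, Int.cast_inj]
  · rw [Set.indicator_of_notMem hξ]
    exact sum_eq_zero fun k hk => if_neg fun h => hξ ⟨k, hk, h⟩

theorem one_sub_div_mem_grid {n j : ℕ} (hj : 0 < j) (hjn : j < 2 * n) :
    1 - (j : ℚ) / n ∈ grid n := by
  have hn : (n : ℚ) ≠ 0 := by exact_mod_cast (by omega : n ≠ 0)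
  refine ⟨n - j, mem_Ioo.2 ⟨by omega, by omega⟩, ?_⟩
  push_cast
  field_simp

theorem exists_eq_one_sub_div_of_mem_grid {n : ℕ} {ξ : ℚ} (hξ : ξ ∈ grid n) :
    ∃ j : ℕ, 0 < j ∧ ξ = 1 - j / n := by
  obtain ⟨k, hk, rfl⟩ := hξ
  obtain ⟨hlo, hhi⟩ := mem_Ioo.1 hk
  have hn : (0 : ℚ) < n := by exact_mod_cast (by omega : 0 < n)
  refine ⟨(n - k).toNat, by omega, ?_⟩
  rw [show (((n - k).toNat : ℕ) : ℚ) = n - k by exact_mod_cast Int.toNat_of_nonneg (by omega)]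
  field_simp
  ring

theorem grid_subset_grid_mul {m : ℕ} (hm : 0 < m) (n : ℕ) : grid n ⊆ grid (m * n) := by
  rintro _ ⟨k, hk, rfl⟩
  obtain ⟨hlo, hhi⟩ := mem_Ioo.1 hk
  have hm' : (m : ℚ) ≠ 0 := by exact_mod_cast hm.ne'
  refine ⟨m * k, mem_Ioo.2 ⟨by push_cast; nlinarith, by push_cast; nlinarith⟩, ?_⟩
  push_cast
  rw [mul_div_mul_left _ _ hm']

theorem S_eq (p q : ℕ) :
    S p q = spectralSum (p + 2 * q) (fun ξ => ⌊(q : ℚ) * (1 - |ξ|)⌋)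
      + spectralSum (p + q) (fun ξ => ⌈(p : ℚ) * (1 - |ξ|)⌉ - 1) := by
  have h (c : ℕ) (k : ℤ) {d : ℚ} (hd : 0 ≤ d) : (c : ℚ) * k.natAbs / d = c * |k / d| := by
    rw [abs_div, abs_of_nonneg hd, Nat.cast_natAbs, Int.cast_abs, mul_div_assoc]
  rw [S, spectralSum, spectralSum]
  push_cast
  congr 1 <;> refine sum_congr rfl fun k _ => ?_ <;> congr 1
  · rw [mul_one_sub, Int.floor_natCast_sub, h _ _ (by positivity)]
  · rw [mul_one_sub, Int.ceil_natCast_sub, h _ _ (by positivity), sub_right_comm]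

theorem S_apply_one_sub_two_div {p q : ℕ} (h : q < p) (hpq : 2 ≤ p + q) :
    S p q (1 - 2 / ((p : ℚ) + q)) = 1 := by
  have h0 : 0 ≤ 1 - 2 / ((p : ℚ) + q) := by exact_mod_cast one_sub_div_nonneg hpq
  have hA : (grid (p + 2 * q)).indicator (fun ξ => ⌊(q : ℚ) * (1 - |ξ|)⌋)
      (1 - 2 / ((p : ℚ) + q)) = 0 := by
    refine Set.indicator_apply_eq_zero.2 fun _ => ?_
    rw [abs_of_nonneg h0, sub_sub_cancel]
    exact_mod_cast floor_natCast_mul_div_eq (c := q) (j := 2) (n := p + q) (v := 0)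
      (by omega) (by omega)
  have hmem : 1 - 2 / ((p : ℚ) + q) ∈ grid (p + q) := by
    exact_mod_cast one_sub_div_mem_grid (n := p + q) (j := 2) two_pos (by omega)
  rw [S_eq, Finsupp.add_apply, spectralSum_apply, spectralSum_apply, hA,
    Set.indicator_of_mem hmem, abs_of_nonneg h0, sub_sub_cancel, zero_add, sub_eq_iff_eq_add]
  exact_mod_cast ceil_natCast_mul_div_eq (c := p) (j := 2) (n := p + q) (v := 2)
    (by omega) (by omega)

theorem S_apply_eq_zero_of_one_sub_two_div_lt {p q : ℕ} (h : q < p) (hpq : 2 ≤ p + q) {ξ : ℚ}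
    (hξ : 1 - 2 / ((p : ℚ) + q) < ξ) : S p q ξ = 0 := by
  have h0 : 0 ≤ ξ := le_trans (by exact_mod_cast one_sub_div_nonneg hpq) hξ.le
  have hA : (grid (p + 2 * q)).indicator (fun ξ => ⌊(q : ℚ) * (1 - |ξ|)⌋) ξ = 0 := by
    refine Set.indicator_apply_eq_zero.2 fun hmem => ?_
    obtain ⟨j, -, rfl⟩ := exists_eq_one_sub_div_of_mem_grid hmem
    have hj : j * (p + q) < 2 * (p + 2 * q) :=
      (one_sub_div_lt_one_sub_div_iff (by omega) (by omega)).1 (by exact_mod_cast hξ)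
    rw [abs_of_nonneg h0, sub_sub_cancel,
      floor_natCast_mul_div_eq (v := 0) (by simp) (by nlinarith)]
    rfl
  have hB : (grid (p + q)).indicator (fun ξ => ⌈(p : ℚ) * (1 - |ξ|)⌉ - 1) ξ = 0 := by
    refine Set.indicator_apply_eq_zero.2 fun hmem => ?_
    obtain ⟨j, hj, rfl⟩ := exists_eq_one_sub_div_of_mem_grid hmem
    have hj2 : j * (p + q) < 2 * (p + q) :=
      (one_sub_div_lt_one_sub_div_iff (by omega) (by omega)).1 (by exact_mod_cast hξ)
    obtain rfl : j = 1 := by have := Nat.lt_of_mul_lt_mul_right hj2; omega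
    rw [abs_of_nonneg h0, sub_sub_cancel,
      ceil_natCast_mul_div_eq (v := 1) (by omega) (by omega)]
    rfl
  rw [S_eq, Finsupp.add_apply, spectralSum_apply, spectralSum_apply, hA, hB, add_zero]

theorem S_apply_one_sub_three_div {p q : ℕ} (h : p ≤ q) (hq : 2 ≤ q) :
    S p q (1 - 3 / ((p : ℚ) + 2 * q)) = 1 := by
  have h0 : 0 ≤ 1 - 3 / ((p : ℚ) + 2 * q) := by
    exact_mod_cast one_sub_div_nonneg (a := 3) (n := p + 2 * q) (by omega)
  have hmem : 1 - 3 / ((p : ℚ) + 2 * q) ∈ grid (p + 2 * q) := by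
    exact_mod_cast one_sub_div_mem_grid (n := p + 2 * q) (j := 3) three_pos (by omega)
  have hB : (grid (p + q)).indicator (fun ξ => ⌈(p : ℚ) * (1 - |ξ|)⌉ - 1)
      (1 - 3 / ((p : ℚ) + 2 * q)) = 0 := by
    refine Set.indicator_apply_eq_zero.2 fun hmem' => ?_
    rw [abs_of_nonneg h0, sub_sub_cancel]
    rcases p.eq_zero_or_pos with rfl | hp
    · obtain ⟨j, -, hj⟩ := exists_eq_one_sub_div_of_mem_grid hmem'
      have hjq : j * (0 + 2 * q) = 3 * (0 + q) :=
        (one_sub_div_eq_one_sub_div_iff (by omega) (by omega)).1 (by exact_mod_cast hj)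
      have := Nat.eq_of_mul_eq_mul_right (by omega : 0 < q) (show 2 * j * q = 3 * q by linarith)
      omega
    · rw [sub_eq_zero]
      exact_mod_cast ceil_natCast_mul_div_eq (c := p) (j := 3) (n := p + 2 * q) (v := 1)
        (by omega) (by omega)
  rw [S_eq, Finsupp.add_apply, spectralSum_apply, spectralSum_apply, hB,
    Set.indicator_of_mem hmem, abs_of_nonneg h0, sub_sub_cancel, add_zero]
  exact_mod_cast floor_natCast_mul_div_eq (c := q) (j := 3) (n := p + 2 * q) (v := 1)
    (by omega) (by omega)

theorem S_apply_eq_zero_of_one_sub_three_div_lt {p q : ℕ} (hp : 0 < p) (h : p ≤ q) {ξ : ℚ}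
    (hξ : 1 - 3 / ((p : ℚ) + 2 * q) < ξ) : S p q ξ = 0 := by
  have h0 : 0 ≤ ξ :=
    le_trans (by exact_mod_cast one_sub_div_nonneg (a := 3) (n := p + 2 * q) (by omega)) hξ.le
  have hA : (grid (p + 2 * q)).indicator (fun ξ => ⌊(q : ℚ) * (1 - |ξ|)⌋) ξ = 0 := by
    refine Set.indicator_apply_eq_zero.2 fun hmem => ?_
    obtain ⟨j, -, rfl⟩ := exists_eq_one_sub_div_of_mem_grid hmem
    have hj : j * (p + 2 * q) < 3 * (p + 2 * q) :=
      (one_sub_div_lt_one_sub_div_iff (by omega) (by omega)).1 (by exact_mod_cast hξ)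
    have hj3 := Nat.lt_of_mul_lt_mul_right hj
    have : q * j ≤ q * 2 := Nat.mul_le_mul_left _ (by omega)
    rw [abs_of_nonneg h0, sub_sub_cancel,
      floor_natCast_mul_div_eq (v := 0) (by simp) (by omega)]
    rfl
  have hB : (grid (p + q)).indicator (fun ξ => ⌈(p : ℚ) * (1 - |ξ|)⌉ - 1) ξ = 0 := by
    refine Set.indicator_apply_eq_zero.2 fun hmem => ?_
    obtain ⟨j, hj, rfl⟩ := exists_eq_one_sub_div_of_mem_grid hmem
    have hjN : j * (p + 2 * q) < 3 * (p + q) :=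
      (one_sub_div_lt_one_sub_div_iff (by omega) (by omega)).1 (by exact_mod_cast hξ)
    obtain rfl : j = 1 := by
      by_contra hne
      have : 2 * (p + 2 * q) ≤ j * (p + 2 * q) := Nat.mul_le_mul_right _ (by omega)
      omega
    rw [abs_of_nonneg h0, sub_sub_cancel,
      ceil_natCast_mul_div_eq (v := 1) (by omega) (by omega)]
    rfl
  rw [S_eq, Finsupp.add_apply, spectralSum_apply, spectralSum_apply, hA, hB, add_zero]

theorem S_zero_apply_eq_zero_of_one_sub_three_div_lt {q : ℕ} (hq : 2 ≤ q) {ξ : ℚ}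
    (hξ : 1 - 3 / (2 * (q : ℚ)) < ξ) : S 0 q ξ = 0 := by
  have h0 : 0 ≤ ξ :=
    le_trans (by exact_mod_cast one_sub_div_nonneg (a := 3) (n := 2 * q) (by omega)) hξ.le
  rw [S_eq, Finsupp.add_apply, spectralSum_apply, spectralSum_apply]
  simp only [zero_add, Nat.cast_zero, zero_mul, Int.ceil_zero, zero_sub]
  by_cases hB : ξ ∈ grid q
  · have hA : ξ ∈ grid (2 * q) := grid_subset_grid_mul two_pos q hB
    obtain ⟨j, hj, rfl⟩ := exists_eq_one_sub_div_of_mem_grid hB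
    have hjq : j * (2 * q) < 3 * q :=
      (one_sub_div_lt_one_sub_div_iff (by omega) (by omega)).1 (by exact_mod_cast hξ)
    obtain rfl : j = 1 := by
      have := Nat.lt_of_mul_lt_mul_right (show 2 * j * q < 3 * q by linarith)
      omega
    rw [Set.indicator_of_mem hA, Set.indicator_of_mem hB, abs_of_nonneg h0, sub_sub_cancel,
      floor_natCast_mul_div_eq (v := 1) (by omega) (by omega)]
    rfl
  · rw [Set.indicator_of_notMem hB, add_zero]
    refine Set.indicator_apply_eq_zero.2 fun hA => ?_
    obtain ⟨j, hj, rfl⟩ := exists_eq_one_sub_div_of_mem_grid hA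
    have hjq : j * (2 * q) < 3 * (2 * q) :=
      (one_sub_div_lt_one_sub_div_iff (by omega) (by omega)).1 (by exact_mod_cast hξ)
    have hj3 := Nat.lt_of_mul_lt_mul_right hjq
    obtain rfl : j = 1 := by
      by_contra hne
      obtain rfl : j = 2 := by omega
      refine hB ?_
      have hq0 : (q : ℚ) ≠ 0 := by positivity
      convert one_sub_div_mem_grid (n := q) (j := 1) one_pos (by omega) using 2
      push_cast
      field_simp
    rw [abs_of_nonneg h0, sub_sub_cancel,
      floor_natCast_mul_div_eq (v := 0) (by omega) (by omega)]
    rfl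

/-- Example 3.2: for `p, q ≥ 0` with `q ≠ 1` and `p + q ≥ 2`, the maximal
element of the support of `S_{p,q}` equals `1 − 2/(p+q)` if `p > q`, and `1 − 3/(p+2q)`
if `p ≤ q`. -/
theorem stmt_4 (p q : ℕ) (hq : q ≠ 1) (hpq : 2 ≤ p + q) :
    IsGreatest (↑(S p q).support : Set ℚ)
      (if q < p then 1 - 2 / ((p : ℚ) + q) else 1 - 3 / ((p : ℚ) + 2 * q)) := by
  split_ifs with h
  · exact (Finsupp.isGreatest_support_iff _ _).2 ⟨by simp [S_apply_one_sub_two_div h hpq],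
      fun ξ => S_apply_eq_zero_of_one_sub_two_div_lt h hpq⟩
  · have hq2 : 2 ≤ q := by omega
    refine (Finsupp.isGreatest_support_iff _ _).2
      ⟨by simp [S_apply_one_sub_three_div (not_lt.1 h) hq2], fun ξ hξ => ?_⟩
    rcases p.eq_zero_or_pos with rfl | hp
    · exact S_zero_apply_eq_zero_of_one_sub_three_div_lt hq2 (by simpa using hξ)
    · exact S_apply_eq_zero_of_one_sub_three_div_lt hp (not_lt.1 h) hξ
end

section
/- Let B := {(p,q) ∈ ℕ × ℕ : q ≠ 1} and let R be the free ℤ-module on B, with basis elements e(p,q). Define a ℤ-bilinear multiplication on R by setting, on basis elements, e(p,q) · e(p',q') := e(p+p'+q', q) + e(p+p'+q, q') − e(p+p'+q+q', 0). Then: (1) this multiplication is commutative; (2) it is associative; (3) e(0,0) is a two-sided unit; (4) for all (p,q) ∈ B one has e(p,q) = e(1,0)^p · e(0,q), so R is generated as a (commutative, associative, unital) ring by e(1,0) and {e(0,q) : q ≥ 2}. -/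
/-!
The multiplication is ℤ-bilinear, so commutativity, associativity and the unit law only need
to be checked on basis vectors, where they are identities between short integer combinations of
basis vectors. The basis vectors `e(p', 0)` act as shifts, `e(p', 0) · e(p, q) = e(p + p', q)`:
for `p' = 0` this is the unit law, and iterating it for `p' = 1` gives `e(p, q) = e(1, 0)^p · e(0, q)`.
-/

/-- The index set `B = {(p,q) ∈ ℕ × ℕ : q ≠ 1}` of the basic types `C_{p,q}`. -/
def BasicIdx : Type := {pq : ℕ × ℕ // pq.2 ≠ 1}

/-- The basis element `e(p,q)` of the free ℤ-module on `B`. -/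
noncomputable def e (p q : ℕ) (h : q ≠ 1) : BasicIdx →₀ ℤ :=
  Finsupp.single ⟨(p, q), h⟩ 1

/-- The ℤ-bilinear multiplication determined on basis elements by
`e(p,q) · e(p',q') = e(p+p'+q', q) + e(p+p'+q, q') − e(p+p'+q+q', 0)`. -/
noncomputable def mulR (x y : BasicIdx →₀ ℤ) : BasicIdx →₀ ℤ :=
  x.sum fun a ca => y.sum fun b cb =>
    (ca * cb) •
      (e (a.1.1 + b.1.1 + b.1.2) a.1.2 a.2
        + e (a.1.1 + b.1.1 + a.1.2) b.1.2 b.2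
        - e (a.1.1 + b.1.1 + a.1.2 + b.1.2) 0 Nat.zero_ne_one)

local notation "R" => BasicIdx →₀ ℤ

lemma linearCombination_e {M : Type*} [AddCommMonoid M] [Module ℤ M] (v : BasicIdx → M)
    (p q : ℕ) (h : q ≠ 1) : Finsupp.linearCombination ℤ v (e p q h) = v ⟨(p, q), h⟩ :=
  (Finsupp.linearCombination_single ℤ 1 _).trans (one_smul ℤ _)

lemma hom_ext_e {M : Type*} [AddCommMonoid M] [Module ℤ M] {f g : R →ₗ[ℤ] M}
    (h : ∀ p q (hq : q ≠ 1), f (e p q hq) = g (e p q hq)) : f = g :=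
  Finsupp.lhom_ext' fun ⟨(p, q), hq⟩ => LinearMap.ext_ring (h p q hq)

lemma e_congr {p p' q : ℕ} (h : q ≠ 1) (hp : p = p') : e p q h = e p' q h := by
  subst hp; rfl

noncomputable def mulBilin : R →ₗ[ℤ] R →ₗ[ℤ] R :=
  Finsupp.linearCombination ℤ fun a => Finsupp.linearCombination ℤ fun b =>
    e (a.1.1 + b.1.1 + b.1.2) a.1.2 a.2
      + e (a.1.1 + b.1.1 + a.1.2) b.1.2 b.2
      - e (a.1.1 + b.1.1 + a.1.2 + b.1.2) 0 Nat.zero_ne_one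

lemma mulR_eq_mulBilin : mulR = fun x y => mulBilin x y := by
  ext x y : 2
  simp only [mulR, mulBilin, Finsupp.linearCombination_apply, LinearMap.finsupp_sum_apply,
    LinearMap.smul_apply, Finsupp.smul_sum, mul_smul]

lemma mulBilin_e_e (p q p' q' : ℕ) (h : q ≠ 1) (h' : q' ≠ 1) :
    mulBilin (e p q h) (e p' q' h') =
      e (p + p' + q') q h + e (p + p' + q) q' h' - e (p + p' + q + q') 0 Nat.zero_ne_one := by
  rw [mulBilin, linearCombination_e, linearCombination_e]

lemma mulBilin_e_zero_e (p p' q : ℕ) (h : q ≠ 1) :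
    mulBilin (e p' 0 Nat.zero_ne_one) (e p q h) = e (p + p') q h := by
  rw [mulBilin_e_e, e_congr Nat.zero_ne_one (show p' + p + q = p' + p + 0 + q by omega),
    add_zero, add_comm p']
  abel

lemma mulBilin_flip : mulBilin.flip = mulBilin :=
  hom_ext_e fun p q h => hom_ext_e fun p' q' h' => by
    rw [LinearMap.flip_apply, mulBilin_e_e, mulBilin_e_e,
      e_congr h (by omega : p' + p + q' = p + p' + q'),
      e_congr h' (by omega : p' + p + q = p + p' + q),
      e_congr Nat.zero_ne_one (by omega : p' + p + q' + q = p + p' + q + q')]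
    abel

lemma mulBilin_comm (x y : R) : mulBilin x y = mulBilin y x :=
  congr($mulBilin_flip y x)

lemma mulBilin_assoc (x y z : R) : mulBilin (mulBilin x y) z = mulBilin x (mulBilin y z) := by
  -- both sides as trilinear maps of `(x, y, z)`
  suffices mulBilin.compr₂ mulBilin = (LinearMap.llcomp ℤ R R R ∘ₗ mulBilin).compl₂ mulBilin from
    congr($this x y z)
  refine hom_ext_e fun p q h => hom_ext_e fun p' q' h' => hom_ext_e fun p'' q'' h'' => ?_
  simp only [LinearMap.compr₂_apply, LinearMap.compl₂_apply, LinearMap.comp_apply,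
    LinearMap.llcomp_apply, mulBilin_e_e, map_add, map_sub, LinearMap.add_apply,
    LinearMap.sub_apply]
  -- after normalising the ℕ indices, both sides are the same nine basis vectors
  ring_nf
  abel

lemma mulBilin_e_zero_zero : mulBilin (e 0 0 Nat.zero_ne_one) = LinearMap.id :=
  hom_ext_e fun p q h => mulBilin_e_zero_e p 0 q h

/-- Corollary 4.5: the multiplication `mulR` on the free ℤ-module on
`B = {(p,q) : q ≠ 1}` is (1) commutative, (2) associative, (3) has `e(0,0)` as a
two-sided unit, and (4) satisfies `e(p,q) = e(1,0)^p · e(0,q)`, so the ring is generated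
by `e(1,0)` and `{e(0,q) : q ≥ 2}`. -/
theorem stmt_6 :
    (∀ x y : BasicIdx →₀ ℤ, mulR x y = mulR y x) ∧
    (∀ x y z : BasicIdx →₀ ℤ, mulR (mulR x y) z = mulR x (mulR y z)) ∧
    (∀ x : BasicIdx →₀ ℤ, mulR (e 0 0 Nat.zero_ne_one) x = x ∧
        mulR x (e 0 0 Nat.zero_ne_one) = x) ∧
    (∀ (p q : ℕ) (h : q ≠ 1),
        e p q h = (mulR (e 1 0 Nat.zero_ne_one))^[p] (e 0 q h)) := by
  simp only [mulR_eq_mulBilin]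
  refine ⟨mulBilin_comm, mulBilin_assoc, fun x => ?_, fun p q h => ?_⟩
  · rw [mulBilin_comm x, mulBilin_e_zero_zero, LinearMap.id_apply, and_self]
  · induction p with
    | zero => rfl
    | succ n ih => rw [Function.iterate_succ_apply', ← ih, mulBilin_e_zero_e]
end

section
/- For every integer m ≥ 1 and every real number α with 0 ≤ α < 1, the strict inequality (m−1)² + 2m/(1−α) > (2/(1−α)²) · C(m − ⌈α·m⌉, 2) holds, where C(n,2) = n(n−1)/2 denotes the binomial coefficient. -/
/-! With `β = 1 - α`, the number `K = max (m - ⌈αm⌉) 0` satisfies `K ≤ βm`, and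
`2·C(K,2) ≤ K²`. Clearing the denominator `β²`, it remains to see `(βm)² < (βm - β)² + 2βm`,
which is `0 < 2βm(1 - β) + β²`. -/

lemma Int.toNat_sub_ceil_le {n : ℤ} {y : ℝ} (hy : y ≤ n) : (((n - ⌈y⌉).toNat : ℕ) : ℝ) ≤ n - y := by
  have hcast : (((n - ⌈y⌉).toNat : ℕ) : ℝ) = max ((n - ⌈y⌉ : ℤ) : ℝ) 0 := by
    rw [← Int.cast_natCast, Int.toNat_eq_max]
    push_cast
    rfl
  rw [hcast, Int.cast_sub]
  exact max_le (by linarith [Int.le_ceil y]) (by linarith)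

lemma Nat.two_mul_choose_two_le_sq (n : ℕ) : 2 * (n.choose 2 : ℝ) ≤ (n : ℝ) ^ 2 := by
  have h := Nat.choose_le_pow_div (α := ℝ) 2 n
  norm_num at h
  linarith

lemma sq_lt_sub_sq_add_two_mul {x β : ℝ} (hx : 0 ≤ x) (hβ0 : 0 < β) (hβ1 : β ≤ 1) :
    x ^ 2 < (x - β) ^ 2 + 2 * x := by
  nlinarith [mul_nonneg hx (sub_nonneg.mpr hβ1)]

theorem stmt_11_general (m : ℕ) (α : ℝ) (h0 : 0 ≤ α) (h1 : α < 1) :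
    ((m : ℝ) - 1) ^ 2 + 2 * m / (1 - α)
      > (2 / (1 - α) ^ 2) * (((m : ℤ) - ⌈α * (m : ℝ)⌉).toNat.choose 2 : ℝ) := by
  have hβ : 0 < 1 - α := by linarith
  set K : ℕ := ((m : ℤ) - ⌈α * (m : ℝ)⌉).toNat
  have hK : (K : ℝ) ≤ (1 - α) * m := by
    have h := Int.toNat_sub_ceil_le (n := m) (y := α * m)
      (by push_cast; nlinarith [(Nat.cast_nonneg m : (0 : ℝ) ≤ m)])
    push_cast at h
    linarith
  rw [gt_iff_lt, div_mul_eq_mul_div, div_lt_iff₀ (by positivity)]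
  calc 2 * (K.choose 2 : ℝ) ≤ (K : ℝ) ^ 2 := Nat.two_mul_choose_two_le_sq K
    _ ≤ ((1 - α) * m) ^ 2 := pow_le_pow_left₀ (Nat.cast_nonneg K) hK 2
    _ < ((1 - α) * m - (1 - α)) ^ 2 + 2 * ((1 - α) * m) :=
      sq_lt_sub_sq_add_two_mul (by positivity) hβ (by linarith)
    _ = (((m : ℝ) - 1) ^ 2 + 2 * m / (1 - α)) * (1 - α) ^ 2 := by
      field_simp

/-- the case of the ordinary `m`-fold point in the generalized Durfee bound:
`(m−1)² + 2m/(1−α) > (2/(1−α)²)·C(m − ⌈α·m⌉, 2)` for every `m ≥ 1` and `0 ≤ α < 1`. -/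
theorem stmt_11 (m : ℕ) (hm : 1 ≤ m) (α : ℝ) (h0 : 0 ≤ α) (h1 : α < 1) :
    ((m : ℝ) - 1) ^ 2 + 2 * m / (1 - α)
      > (2 / (1 - α) ^ 2) * (((m : ℤ) - ⌈α * (m : ℝ)⌉).toNat.choose 2 : ℝ) :=
  stmt_11_general m α h0 h1
end
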